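/- Let A have Spark(A) = L+1 with k ≤ L, and suppose γ(ℓ_0, A, k) < 1. Then there exists p > 0 such that γ(ℓ_p, A, k) < 1. -/

import Mathlib

/-!
Testing the `ℓ₀` inequality on a kernel vector of minimal support shows that `γ(ℓ₀, A, k) < 1`
forces `2k < Spark(A)`. So for `|T| ≤ 2k` the map `z ↦ (A z, z|_{Tᶜ})` is injective, hence
antilipschitz, which yields a uniform `δ > 0` such that every kernel vector `z` has more than `2k`
entries with `|z i| ≥ δ ‖z‖∞`. For `|S| ≤ k` this gives `∑_S |z i|^p ≤ k ‖z‖^p` and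
`∑_{Sᶜ} |z i|^p ≥ (k + 1) δ^p ‖z‖^p`, so `γ(ℓ_p, A, k) ≤ k / ((k + 1) δ^p)`, which is `< 1` as soon
as `δ^p > k / (k + 1)`, i.e. for all small `p > 0`.
-/

open Finset MeasureTheory Filter

/-- `phi p x = |x|^p`, with the convention `|x|^0 = 1` for `x ≠ 0` and `phi p 0 = 0`. -/
noncomputable def phi (p x : ℝ) : ℝ := if x = 0 then 0 else |x| ^ p

open Classical in
/-- support of a vector, as a finset -/
noncomputable def supp {n : ℕ} (z : Fin n → ℝ) : Finset (Fin n) :=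
  Finset.univ.filter (fun i => z i ≠ 0)

/-- `Spark(A) = s`: some `s` columns are linearly dependent (a kernel vector with support of
size `s`), and every nonzero kernel vector has support of size at least `s`. -/
def sparkEq {m n : ℕ} (A : Matrix (Fin m) (Fin n) ℝ) (s : ℕ) : Prop :=
  (∃ z, A.mulVec z = 0 ∧ z ≠ 0 ∧ (supp z).card = s) ∧
  (∀ z, A.mulVec z = 0 → z ≠ 0 → s ≤ (supp z).card)

/-- The set of constants `γ` satisfying the null space property inequality at level `k`. -/
def validNSC {m n : ℕ} (A : Matrix (Fin m) (Fin n) ℝ) (p : ℝ) (k : ℕ) : Set ℝ :=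
  {γ | ∀ S : Finset (Fin n), S.card ≤ k → ∀ z, A.mulVec z = 0 →
    ∑ i ∈ S, phi p (z i) ≤ γ * ∑ i ∈ Sᶜ, phi p (z i)}

/-- The null space constant `γ(ℓ_p, A, k)`: the smallest valid constant. -/
noncomputable def gammaNSC {m n : ℕ} (A : Matrix (Fin m) (Fin n) ℝ) (p : ℝ) (k : ℕ) : ℝ :=
  sInf (validNSC A p k)

/-- The ratio `θ(p, z, S)`. -/
noncomputable def theta {n : ℕ} (p : ℝ) (z : Fin n → ℝ) (S : Finset (Fin n)) : ℝ :=
  (∑ i ∈ S, phi p (z i)) / (∑ i ∈ Sᶜ, phi p (z i))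

open Matrix Topology

lemma phi_nonneg (p x : ℝ) : 0 ≤ phi p x := by
  unfold phi
  split_ifs
  exacts [le_rfl, Real.rpow_nonneg (abs_nonneg x) p]

lemma sum_phi_zero {n : ℕ} (z : Fin n → ℝ) (s : Finset (Fin n)) :
    ∑ i ∈ s, phi 0 (z i) = #(s ∩ supp z) := by
  rw [supp, inter_filter, inter_univ, card_filter, Nat.cast_sum]
  refine sum_congr rfl fun i _ => ?_
  by_cases hi : z i = 0 <;> simp [phi, hi]

lemma phi_le_rpow_norm {n : ℕ} {p : ℝ} (hp : 0 ≤ p) (z : Fin n → ℝ) (i : Fin n) :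
    phi p (z i) ≤ ‖z‖ ^ p := by
  unfold phi
  split_ifs
  · exact Real.rpow_nonneg (norm_nonneg z) p
  · exact Real.rpow_le_rpow (abs_nonneg _) (norm_le_pi_norm z i) hp

lemma rpow_le_phi {p a x : ℝ} (hp : 0 ≤ p) (ha : 0 < a) (hx : a ≤ |x|) : a ^ p ≤ phi p x := by
  have hx0 : x ≠ 0 := abs_pos.mp (ha.trans_le hx)
  rw [phi, if_neg hx0]
  exact Real.rpow_le_rpow ha.le hx hp

lemma gammaNSC_lt_of_mem {m n : ℕ} {A : Matrix (Fin m) (Fin n) ℝ} {p : ℝ} {k : ℕ} {γ b : ℝ}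
    (hγ : γ ∈ validNSC A p k) (hγb : γ < b) (hb : 0 < b) : gammaNSC A p k < b := by
  by_cases hbdd : BddBelow (validNSC A p k)
  · exact (csInf_le hbdd hγ).trans_lt hγb
  · rwa [gammaNSC, Real.sInf_of_not_bddBelow hbdd]

lemma natCast_mem_validNSC_zero {m n : ℕ} {A : Matrix (Fin m) (Fin n) ℝ} {k : ℕ}
    (hA : ∀ z, A *ᵥ z = 0 → z ≠ 0 → k < #(supp z)) : (k : ℝ) ∈ validNSC A 0 k := by
  intro S hS z hz
  by_cases hz0 : z = 0
  · simp [hz0, phi]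
  have hout : (Sᶜ ∩ supp z).Nonempty := by
    by_contra hempty
    have hsub : supp z ⊆ S := fun i hi => by
      by_contra hiS
      exact hempty ⟨i, mem_inter.mpr ⟨mem_compl.mpr hiS, hi⟩⟩
    exact (card_le_card hsub).not_gt (hS.trans_lt (hA z hz hz0))
  have hin : #(S ∩ supp z) ≤ k := (card_le_card inter_subset_left).trans hS
  rw [sum_phi_zero, sum_phi_zero]
  calc ((#(S ∩ supp z) : ℕ) : ℝ) ≤ k * 1 := by rw [mul_one]; exact_mod_cast hin
    _ ≤ k * #(Sᶜ ∩ supp z) := by gcongr; exact_mod_cast hout.card_pos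

lemma two_mul_lt_of_gammaNSC_zero_lt_one {m n : ℕ} {A : Matrix (Fin m) (Fin n) ℝ} {k s : ℕ}
    (hspark : sparkEq A s) (hks : k < s) (h : gammaNSC A 0 k < 1) : 2 * k < s := by
  obtain ⟨⟨z₀, hz₀, -, hcard⟩, hmin⟩ := hspark
  obtain ⟨γ, hγ, hγ1⟩ := exists_lt_of_csInf_lt
    ⟨_, natCast_mem_validNSC_zero fun z hz hz0 => hks.trans_le (hmin z hz hz0)⟩ h
  obtain ⟨S, hS, hScard⟩ := exists_subset_card_eq (hcard ▸ hks.le : k ≤ #(supp z₀))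
  have hval := hγ S hScard.le z₀ hz₀
  rw [sum_phi_zero, sum_phi_zero, inter_eq_left.mpr hS, inter_comm, ← sdiff_eq_inter_compl,
    card_sdiff_of_subset hS, hcard, hScard, Nat.cast_sub hks.le] at hval
  have hpos : (0 : ℝ) < s - k := sub_pos.mpr (by exact_mod_cast hks)
  have : (k : ℝ) < s - k := hval.trans_lt (by nlinarith)
  have : ((2 * k : ℕ) : ℝ) < s := by push_cast; linarith
  exact_mod_cast this

lemma exists_norm_le_mul_of_abs_le_off {m n : ℕ} (A : Matrix (Fin m) (Fin n) ℝ)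
    (T : Finset (Fin n)) (hT : ∀ z, A *ᵥ z = 0 → supp z ⊆ T → z = 0) :
    ∃ C : ℝ, ∀ z, A *ᵥ z = 0 → ∀ t, 0 ≤ t → (∀ i ∉ T, |z i| ≤ t) → ‖z‖ ≤ C * t := by
  let f := (mulVecLin A).prod (LinearMap.funLeft ℝ ℝ (Subtype.val : {i // i ∉ T} → Fin n))
  have hker : LinearMap.ker f = ⊥ := by
    refine LinearMap.ker_eq_bot'.mpr fun z hz => hT z (congrArg Prod.fst hz) fun i hi => ?_
    by_contra hiT
    have : z i = 0 := congrFun (congrArg Prod.snd hz) ⟨i, hiT⟩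
    simp [supp, this] at hi
  obtain ⟨K, -, hK⟩ := f.exists_antilipschitzWith hker
  refine ⟨K, fun z hz t ht hoff => ?_⟩
  calc ‖z‖ ≤ K * ‖f z‖ := ZeroHomClass.bound_of_antilipschitz f hK z
    _ ≤ K * t := by
      have hfz : f z = (0, fun i : {i // i ∉ T} => z i) := Prod.ext hz rfl
      rw [hfz, Prod.norm_def, norm_zero]
      gcongr
      refine max_le ht ((pi_norm_le_iff_of_nonneg ht).mpr fun i => ?_)
      exact hoff i i.2

lemma exists_pos_lt_card_large_coords {m n : ℕ} (A : Matrix (Fin m) (Fin n) ℝ) (r : ℕ)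
    (hA : ∀ z, A *ᵥ z = 0 → z ≠ 0 → r < #(supp z)) :
    ∃ δ > 0, ∀ z, A *ᵥ z = 0 → z ≠ 0 → r < #{i | δ * ‖z‖ ≤ |z i|} := by
  have hT (T : {T : Finset (Fin n) // #T ≤ r}) (z) (hz : A *ᵥ z = 0) (hsub : supp z ⊆ T.1) :
      z = 0 :=
    by_contra fun hz0 => (card_le_card hsub).not_gt (T.2.trans_lt (hA z hz hz0))
  choose C hC using fun T => exists_norm_le_mul_of_abs_le_off A T.1 (hT T)
  obtain ⟨D, hD⟩ := Finite.exists_le C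
  refine ⟨1 / (2 * max D 1), by positivity, fun z hz hz0 => ?_⟩
  by_contra! hsmall
  set t := 1 / (2 * max D 1) * ‖z‖
  have hbound := hC ⟨_, hsmall⟩ z hz t (by positivity) fun i hi => by
    simp only [mem_filter, mem_univ, true_and, not_le] at hi
    exact hi.le
  have : ‖z‖ ≤ ‖z‖ / 2 := calc
    ‖z‖ ≤ C ⟨_, hsmall⟩ * t := hbound
    _ ≤ max D 1 * t := by gcongr; exact (hD _).trans (le_max_left D 1)
    _ = ‖z‖ / 2 := by simp only [t]; field_simp
  exact hz0 (norm_le_zero_iff.mp (by linarith))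

lemma div_mem_validNSC_of_lt_card_large_coords {m n : ℕ} {A : Matrix (Fin m) (Fin n) ℝ} {k : ℕ}
    {p δ : ℝ} (hp : 0 ≤ p) (hδ : 0 < δ)
    (hlarge : ∀ z, A *ᵥ z = 0 → z ≠ 0 → 2 * k < #{i | δ * ‖z‖ ≤ |z i|}) :
    k / ((k + 1) * δ ^ p) ∈ validNSC A p k := by
  intro S hS z hz
  by_cases hz0 : z = 0
  · simp [hz0, phi]
  set W : Finset (Fin n) := {i | δ * ‖z‖ ≤ |z i|}
  have hWS : k + 1 ≤ #(W \ S) := by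
    have hW : 2 * k < #W := hlarge z hz hz0
    have := le_card_sdiff S W
    omega
  have hlargeW : ∀ i ∈ W, δ * ‖z‖ ≤ |z i| := fun i hi => (mem_filter.mp hi).2
  have hnorm : 0 < ‖z‖ := norm_pos_iff.mpr hz0
  have hin : ∑ i ∈ S, phi p (z i) ≤ k * ‖z‖ ^ p := calc
    _ ≤ #S • ‖z‖ ^ p := sum_le_card_nsmul _ _ _ fun i _ => phi_le_rpow_norm hp z i
    _ ≤ k * ‖z‖ ^ p := by rw [nsmul_eq_mul]; gcongr
  have hout : (k + 1) * (δ ^ p * ‖z‖ ^ p) ≤ ∑ i ∈ Sᶜ, phi p (z i) := calc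
    (k + 1) * (δ ^ p * ‖z‖ ^ p) ≤ #(W \ S) • (δ * ‖z‖) ^ p := by
      rw [nsmul_eq_mul, Real.mul_rpow hδ.le hnorm.le]
      gcongr
      exact_mod_cast hWS
    _ ≤ ∑ i ∈ W \ S, phi p (z i) := card_nsmul_le_sum _ _ _ fun i hi =>
      rpow_le_phi hp (by positivity) (hlargeW i (mem_sdiff.mp hi).1)
    _ ≤ ∑ i ∈ Sᶜ, phi p (z i) :=
      sum_le_sum_of_subset_of_nonneg (fun i hi => mem_compl.mpr (mem_sdiff.mp hi).2)
        fun i _ _ => phi_nonneg p (z i)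
  calc ∑ i ∈ S, phi p (z i) ≤ k * ‖z‖ ^ p := hin
    _ = k / ((k + 1) * δ ^ p) * ((k + 1) * (δ ^ p * ‖z‖ ^ p)) := by
      have : 0 < δ ^ p := Real.rpow_pos_of_pos hδ p
      field_simp
    _ ≤ k / ((k + 1) * δ ^ p) * ∑ i ∈ Sᶜ, phi p (z i) := by gcongr

/-- if γ(ℓ_0,A,k) < 1 then γ(ℓ_p,A,k) < 1 for some p > 0. -/
theorem stmt9 {M N L : ℕ} (A : Matrix (Fin M) (Fin N) ℝ) (hspark : sparkEq A (L + 1))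
    (k : ℕ) (hk : k ≤ L) (h : gammaNSC A 0 k < 1) :
    ∃ p : ℝ, 0 < p ∧ p ≤ 1 ∧ gammaNSC A p k < 1 := by
  have h2k : 2 * k < L + 1 := two_mul_lt_of_gammaNSC_zero_lt_one hspark (Nat.lt_succ_of_le hk) h
  obtain ⟨δ, hδ, hlarge⟩ := exists_pos_lt_card_large_coords A (2 * k)
    fun z hz hz0 => h2k.trans_le (hspark.2 z hz hz0)
  have hlim : Tendsto (fun p : ℝ => (k : ℝ) / ((k + 1) * δ ^ p)) (𝓝[>] 0) (𝓝 (k / (k + 1))) := by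
    have hδp := (Real.continuousAt_const_rpow (b := 0) hδ.ne').tendsto
    have := (tendsto_const_nhds (x := (k : ℝ))).div (hδp.const_mul ((k : ℝ) + 1))
      (mul_pos (by positivity) (Real.rpow_pos_of_pos hδ 0)).ne'
    rw [Real.rpow_zero, mul_one] at this
    exact this.mono_left nhdsWithin_le_nhds
  have hk1 : (k : ℝ) / (k + 1) < 1 := by rw [div_lt_one (by positivity)]; linarith
  obtain ⟨p, hp_lt, hp_pos, hp_le⟩ :=
    ((hlim.eventually (gt_mem_nhds hk1)).and (Ioc_mem_nhdsGT one_pos)).exists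
  exact ⟨p, hp_pos, hp_le, gammaNSC_lt_of_mem
    (div_mem_validNSC_of_lt_card_large_coords hp_pos.le hδ hlarge) hp_lt one_pos⟩
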